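/- In the braid group B_4, for all natural numbers a and b, the identity σ2^{-1}·σ3·σ2^{2a+3}·σ1·σ2^{-1}·σ3^{-1}·σ2·σ1^{-1}·σ2^{2b+1}·σ1·σ2^{-1} = σ2^{-1}·σ3·σ2^{2a+3}·σ3·σ2^{-1}·σ1^{-1}·σ2·σ3^{-1}·σ2^{2b+1}·σ1·σ2^{-1} holds. -/
import Mathlib


/-- The braid relations for the braid group `B₄` on generators `σ₁, σ₂, σ₃`
(indexed by `0, 1, 2`). -/
def braidRels4 : Set (FreeGroup (Fin 3)) :=
  { FreeGroup.of 0 * FreeGroup.of 2 * (FreeGroup.of 2 * FreeGroup.of 0)⁻¹,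
    FreeGroup.of 0 * FreeGroup.of 1 * FreeGroup.of 0 *
      (FreeGroup.of 1 * FreeGroup.of 0 * FreeGroup.of 1)⁻¹,
    FreeGroup.of 1 * FreeGroup.of 2 * FreeGroup.of 1 *
      (FreeGroup.of 2 * FreeGroup.of 1 * FreeGroup.of 2)⁻¹ }

/-- The braid group `B₄` on four strands, as a presented group. -/
abbrev B4 : Type := PresentedGroup braidRels4

/-- The Artin generators: `s 0 = σ₁`, `s 1 = σ₂`, `s 2 = σ₃`. -/
def s (i : Fin 3) : B4 := PresentedGroup.of i

lemma rel_one {r : FreeGroup (Fin 3)} (h : r ∈ braidRels4) :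
    (QuotientGroup.mk r : B4) = 1 :=
  (QuotientGroup.eq_one_iff r).mpr (Subgroup.subset_normalClosure h)

lemma comm02 : s 0 * s 2 = s 2 * s 0 := by
  have h := rel_one (show _ ∈ braidRels4 from Or.inl rfl)
  simp only [QuotientGroup.mk_mul, QuotientGroup.mk_inv] at h
  exact mul_inv_eq_one.mp h

lemma braid01 : s 0 * s 1 * s 0 = s 1 * s 0 * s 1 := by
  have h := rel_one (show _ ∈ braidRels4 from Or.inr (Or.inl rfl))
  simp only [QuotientGroup.mk_mul, QuotientGroup.mk_inv] at h
  exact mul_inv_eq_one.mp h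

lemma braid12 : s 1 * s 2 * s 1 = s 2 * s 1 * s 2 := by
  have h := rel_one (show _ ∈ braidRels4 from Or.inr (Or.inr rfl))
  simp only [QuotientGroup.mk_mul, QuotientGroup.mk_inv] at h
  exact mul_inv_eq_one.mp h

lemma inv01 : (s 1)⁻¹ * (s 0)⁻¹ * (s 1)⁻¹ = (s 0)⁻¹ * (s 1)⁻¹ * (s 0)⁻¹ := by
  have h := congrArg (·⁻¹) braid01
  simpa [mul_assoc] using h.symm

lemma inv12 : (s 1)⁻¹ * (s 2)⁻¹ * (s 1)⁻¹ = (s 2)⁻¹ * (s 1)⁻¹ * (s 2)⁻¹ := by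
  have h := congrArg (·⁻¹) braid12
  simpa [mul_assoc] using h

lemma key : s 0 * (s 1)⁻¹ * (s 2)⁻¹ * s 1 * (s 0)⁻¹ =
    s 2 * (s 1)⁻¹ * (s 0)⁻¹ * s 1 * (s 2)⁻¹ := by
  have h1 : (s 1)⁻¹ * (s 2)⁻¹ * s 1 = s 2 * (s 1)⁻¹ * (s 2)⁻¹ := by
    calc (s 1)⁻¹ * (s 2)⁻¹ * s 1
        = s 2 * (((s 2)⁻¹ * (s 1)⁻¹ * (s 2)⁻¹) * s 1) := by group
      _ = s 2 * (((s 1)⁻¹ * (s 2)⁻¹ * (s 1)⁻¹) * s 1) := by rw [inv12]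
      _ = s 2 * (s 1)⁻¹ * (s 2)⁻¹ := by group
  have h2 : s 0 * (s 1)⁻¹ * (s 0)⁻¹ = (s 1)⁻¹ * (s 0)⁻¹ * s 1 := by
    calc s 0 * (s 1)⁻¹ * (s 0)⁻¹
        = s 0 * ((s 1)⁻¹ * (s 0)⁻¹ * (s 1)⁻¹) * s 1 := by group
      _ = s 0 * ((s 0)⁻¹ * (s 1)⁻¹ * (s 0)⁻¹) * s 1 := by rw [inv01]
      _ = (s 1)⁻¹ * (s 0)⁻¹ * s 1 := by group
  calc s 0 * (s 1)⁻¹ * (s 2)⁻¹ * s 1 * (s 0)⁻¹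
      = s 0 * ((s 1)⁻¹ * (s 2)⁻¹ * s 1) * (s 0)⁻¹ := by group
    _ = s 0 * (s 2 * (s 1)⁻¹ * (s 2)⁻¹) * (s 0)⁻¹ := by rw [h1]
    _ = (s 0 * s 2) * (s 1)⁻¹ * ((s 0 * s 2)⁻¹) := by group
    _ = (s 2 * s 0) * (s 1)⁻¹ * ((s 2 * s 0)⁻¹) := by rw [comm02]
    _ = s 2 * (s 0 * (s 1)⁻¹ * (s 0)⁻¹) * (s 2)⁻¹ := by group
    _ = s 2 * ((s 1)⁻¹ * (s 0)⁻¹ * s 1) * (s 2)⁻¹ := by rw [h2]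
    _ = s 2 * (s 1)⁻¹ * (s 0)⁻¹ * s 1 * (s 2)⁻¹ := by group

/-- In `B₄`,
`σ₂⁻¹ σ₃ σ₂^{2a+3} σ₁ σ₂⁻¹ σ₃⁻¹ σ₂ σ₁⁻¹ σ₂^{2b+1} σ₁ σ₂⁻¹
 = σ₂⁻¹ σ₃ σ₂^{2a+3} σ₃ σ₂⁻¹ σ₁⁻¹ σ₂ σ₃⁻¹ σ₂^{2b+1} σ₁ σ₂⁻¹`. -/
theorem braid_word_identity' (a b : ℕ) :
    (s 1)⁻¹ * s 2 * (s 1) ^ (2 * a + 3) * s 0 * (s 1)⁻¹ * (s 2)⁻¹ * s 1 * (s 0)⁻¹ *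
      (s 1) ^ (2 * b + 1) * s 0 * (s 1)⁻¹ =
    (s 1)⁻¹ * s 2 * (s 1) ^ (2 * a + 3) * s 2 * (s 1)⁻¹ * (s 0)⁻¹ * s 1 * (s 2)⁻¹ *
      (s 1) ^ (2 * b + 1) * s 0 * (s 1)⁻¹ := by
  calc (s 1)⁻¹ * s 2 * (s 1) ^ (2 * a + 3) * s 0 * (s 1)⁻¹ * (s 2)⁻¹ * s 1 * (s 0)⁻¹ *
      (s 1) ^ (2 * b + 1) * s 0 * (s 1)⁻¹
      = (s 1)⁻¹ * s 2 * (s 1) ^ (2 * a + 3) *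
        (s 0 * (s 1)⁻¹ * (s 2)⁻¹ * s 1 * (s 0)⁻¹) *
        ((s 1) ^ (2 * b + 1) * s 0 * (s 1)⁻¹) := by group
    _ = (s 1)⁻¹ * s 2 * (s 1) ^ (2 * a + 3) *
        (s 2 * (s 1)⁻¹ * (s 0)⁻¹ * s 1 * (s 2)⁻¹) *
        ((s 1) ^ (2 * b + 1) * s 0 * (s 1)⁻¹) := by rw [key]
    _ = _ := by group
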